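/- For |q|<1 and all a: Σ_{n≥0} (a;q)_n q^{n(n+1)/2} / (q;q)_n = (−q;q)_∞ (aq;q²)_∞. -/

import Mathlib

/-!
Write `F a = ∑ (a;q)_n q^{n(n+1)/2} / (q;q)_n`. Termwise, `F a - (1 - a q) F (a q²)` telescopes, so
`F a = (1 - a q) F (a q²)`; iterating and letting `a q^{2N} → 0` (the series is continuous in `a`)
gives `F a = (aq;q²)_∞ F 0`. Now `F 0 = E 1` for Euler's series `E z = ∑ z^n q^{n(n+1)/2} / (q;q)_n`,
which satisfies `E z = (1 + z q) E (z q)` by the same telescoping, so likewise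
`E 1 = (-q;q)_∞ E 0 = (-q;q)_∞`.
-/

open Filter Finset Topology

namespace BaileyDaum

section Algebra

variable {𝕜 : Type*} [Field 𝕜]

def qPochhammer (a q : 𝕜) (n : ℕ) : 𝕜 := ∏ j ∈ range n, (1 - a * q ^ j)

lemma qPochhammer_succ (a q : 𝕜) (n : ℕ) :
    qPochhammer a q (n + 1) = qPochhammer a q n * (1 - a * q ^ n) :=
  prod_range_succ _ n

lemma qPochhammer_succ' (a q : 𝕜) (n : ℕ) :
    qPochhammer a q (n + 1) = (1 - a) * qPochhammer (a * q) q n := by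
  simp only [qPochhammer, prod_range_succ', pow_succ, pow_zero, mul_one, mul_assoc, mul_comm]

lemma triangle_succ (n : ℕ) : (n + 1) * (n + 1 + 1) / 2 = n * (n + 1) / 2 + (n + 1) := by
  rw [show (n + 1) * (n + 1 + 1) = n * (n + 1) + (n + 1) * 2 by ring,
    Nat.add_mul_div_right _ _ two_pos]

def term (q a z : 𝕜) (n : ℕ) : 𝕜 :=
  qPochhammer a q n * z ^ n * q ^ (n * (n + 1) / 2) / qPochhammer q q n

lemma term_zero (q a z : 𝕜) : term q a z 0 = 1 := by
  simp [term, qPochhammer]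

lemma term_succ (q a z : 𝕜) (n : ℕ) :
    term q a z (n + 1) = term q a z n * ((1 - a * q ^ n) * z * q ^ (n + 1) / (1 - q * q ^ n)) := by
  rw [term, term, qPochhammer_succ, qPochhammer_succ, triangle_succ, pow_add, pow_succ z]
  generalize 1 - q * q ^ n = s
  ring

lemma term_mul_right (q a z : 𝕜) (n : ℕ) : term q a (z * q) n = q ^ n * term q a z n := by
  rw [term, term, mul_pow]
  ring

lemma euler_term_succ_sub (q z : 𝕜) {n : ℕ} (hn : 1 - q * q ^ n ≠ 0) :
    term q 0 z (n + 1) - term q 0 (z * q) (n + 1) = z * q * term q 0 (z * q) n := by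
  rw [term_succ, term_succ, term_mul_right]
  calc _ = z * q * (q ^ n * term q 0 z n) * ((1 - q * q ^ n) / (1 - q * q ^ n)) := by ring
    _ = _ := by rw [div_self hn, mul_one]

lemma term_succ_sub_mul_term_succ (q a : 𝕜) {n : ℕ} (hD : qPochhammer q q (n + 1) ≠ 0) :
    term q a 1 (n + 1) - (1 - a * q) * term q (a * q ^ 2) 1 (n + 1) =
      a * q * (term q (a * q) q (n + 1) - term q (a * q) q n) := by
  have hP : (1 - a * q) * qPochhammer (a * q ^ 2) q (n + 1) =
      qPochhammer (a * q) q n * (1 - a * q * q ^ n) * (1 - a * q * q ^ (n + 1)) := by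
    rw [show a * q ^ 2 = a * q * q by ring, ← qPochhammer_succ', qPochhammer_succ, qPochhammer_succ]
  rw [qPochhammer_succ] at hD
  have hs : 1 - q * q ^ n ≠ 0 := right_ne_zero_of_mul hD
  have hD' : qPochhammer q q n ≠ 0 := left_ne_zero_of_mul hD
  simp only [term, qPochhammer_succ' a, qPochhammer_succ (a * q) q n, qPochhammer_succ q q n,
    triangle_succ, pow_add, one_pow, mul_one]
  field_simp
  linear_combination -(q ^ (n * (n + 1) / 2) * q ^ n * q) * hP

end Algebra

section Telescoping

variable {R : Type*} [Ring R] [TopologicalSpace R] [IsTopologicalRing R] [T2Space R]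

lemma tsum_eq_mul_tsum_of_telescoping {f g u : ℕ → R} (c : R) (hf : Summable f) (hg : Summable g)
    (hu : Summable u) (h0 : f 0 - c * g 0 = u 0)
    (hsucc : ∀ n, f (n + 1) - c * g (n + 1) = u (n + 1) - u n) :
    ∑' n, f n = c * ∑' n, g n := by
  have hu' : Summable fun n => u (n + 1) := (summable_nat_add_iff 1).2 hu
  have hsum : ∑' n, (f n - c * g n) = 0 := by
    rw [(hf.sub (hg.mul_left c)).tsum_eq_zero_add, h0, tsum_congr hsucc, hu'.tsum_sub hu,
      hu.tsum_eq_zero_add]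
    abel
  rw [hf.tsum_sub (hg.mul_left c), hg.tsum_mul_left] at hsum
  exact sub_eq_zero.1 hsum

end Telescoping

section Analysis

variable {𝕜 : Type*} [NormedField 𝕜] {q : 𝕜}

lemma one_sub_norm_le_norm_one_sub_mul_pow (hq : ‖q‖ ≤ 1) (j : ℕ) :
    1 - ‖q‖ ≤ ‖1 - q * q ^ j‖ := by
  have hle : ‖q * q ^ j‖ ≤ ‖q‖ := by
    rw [norm_mul, norm_pow]
    exact mul_le_of_le_one_right (norm_nonneg q) (pow_le_one₀ (norm_nonneg q) hq)
  have := norm_sub_norm_le (1 : 𝕜) (q * q ^ j)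
  rw [norm_one] at this
  linarith

lemma qPochhammer_self_ne_zero (hq : ‖q‖ < 1) (n : ℕ) : qPochhammer q q n ≠ 0 := by
  refine prod_ne_zero_iff.2 fun j _ h => ?_
  have := one_sub_norm_le_norm_one_sub_mul_pow hq.le j
  rw [h, norm_zero] at this
  linarith

lemma norm_one_sub_mul_pow_le (hq : ‖q‖ ≤ 1) (a : 𝕜) (j : ℕ) : ‖1 - a * q ^ j‖ ≤ 1 + ‖a‖ := by
  refine (norm_sub_le _ _).trans ?_
  rw [norm_one, norm_mul, norm_pow]
  gcongr
  exact mul_le_of_le_one_right (norm_nonneg a) (pow_le_one₀ (norm_nonneg q) hq)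

lemma term_eq_prod_mul (q a z : 𝕜) (n : ℕ) :
    term q a z n =
      (∏ j ∈ range n, (1 - a * q ^ j) * z / (1 - q * q ^ j)) * q ^ (n * (n + 1) / 2) := by
  rw [term, qPochhammer, qPochhammer, prod_div_distrib, prod_mul_distrib, prod_const, card_range]
  ring

lemma norm_term_le (hq : ‖q‖ < 1) {a z : 𝕜} {A Z : ℝ} (ha : ‖a‖ ≤ A) (hz : ‖z‖ ≤ Z) (n : ℕ) :
    ‖term q a z n‖ ≤ ((1 + A) * Z / (1 - ‖q‖)) ^ n * ‖q‖ ^ (n * (n + 1) / 2) := by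
  have hfactor (j : ℕ) : ‖(1 - a * q ^ j) * z / (1 - q * q ^ j)‖ ≤ (1 + A) * Z / (1 - ‖q‖) := by
    rw [norm_div, norm_mul]
    refine div_le_div₀ (by positivity [(norm_nonneg z).trans hz, (norm_nonneg a).trans ha]) ?_
      (by linarith) (one_sub_norm_le_norm_one_sub_mul_pow hq.le j)
    exact mul_le_mul ((norm_one_sub_mul_pow_le hq.le a j).trans (by linarith)) hz
      (norm_nonneg z) (by linarith [norm_nonneg a])
  rw [term_eq_prod_mul, norm_mul, norm_prod, norm_pow]
  gcongr
  exact (prod_le_prod (fun _ _ => norm_nonneg _) fun j _ => hfactor j).trans_eq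
    (by rw [prod_const, card_range])

lemma summable_pow_mul_pow_triangle (C : ℝ) {r : ℝ} (hr0 : 0 ≤ r) (hr : r < 1) :
    Summable fun n : ℕ => C ^ n * r ^ (n * (n + 1) / 2) := by
  refine summable_of_ratio_norm_eventually_le one_half_lt_one ?_
  have hlim : Tendsto (fun n : ℕ => |C| * r ^ (n + 1)) atTop (𝓝 0) := by
    simpa using ((tendsto_pow_atTop_nhds_zero_of_lt_one hr0 hr).comp
      (tendsto_add_atTop_nat 1)).const_mul |C|
  filter_upwards [hlim.eventually (ge_mem_nhds one_half_pos)] with n hn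
  calc ‖C ^ (n + 1) * r ^ ((n + 1) * (n + 1 + 1) / 2)‖
      = |C| * r ^ (n + 1) * ‖C ^ n * r ^ (n * (n + 1) / 2)‖ := by
        simp only [triangle_succ, pow_add, pow_succ C, norm_mul, norm_pow, Real.norm_eq_abs,
          abs_of_nonneg hr0]
        ring
    _ ≤ 1 / 2 * ‖C ^ n * r ^ (n * (n + 1) / 2)‖ := mul_le_mul_of_nonneg_right hn (norm_nonneg _)

lemma tsum_euler_term_zero (q : 𝕜) : ∑' n, term q 0 0 n = 1 := by
  rw [tsum_eq_single 0 fun n hn => by simp [term, zero_pow hn], term_zero]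

variable [CompleteSpace 𝕜]

lemma summable_term (hq : ‖q‖ < 1) (a z : 𝕜) : Summable (term q a z) :=
  .of_norm_bounded (summable_pow_mul_pow_triangle _ (norm_nonneg q) hq)
    (norm_term_le hq le_rfl le_rfl)

lemma continuous_tsum_term (hq : ‖q‖ < 1) :
    Continuous fun p : 𝕜 × 𝕜 => ∑' n, term q p.1 p.2 n := by
  refine continuous_iff_continuousAt.2 fun p => ?_
  set R := ‖p‖ + 1
  refine (continuousOn_tsum (fun n => ?_)
    (summable_pow_mul_pow_triangle ((1 + R) * R / (1 - ‖q‖)) (norm_nonneg q) hq)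
    (fun n x hx => norm_term_le hq ?_ ?_ n)).continuousAt
    (Metric.isOpen_ball.mem_nhds (mem_ball_zero_iff.2 (lt_add_one _)))
  · unfold term qPochhammer
    fun_prop
  · exact (norm_fst_le x).trans (mem_ball_zero_iff.1 hx).le
  · exact (norm_snd_le x).trans (mem_ball_zero_iff.1 hx).le

lemma eq_tprod_mul_of_eq_mul_comp {F : 𝕜 → 𝕜} {b r : 𝕜} (hr : ‖r‖ < 1)
    (hF : ∀ x, F x = (1 + b * x) * F (x * r)) (hF0 : ContinuousAt F 0) (x : 𝕜) :
    F x = (∏' j : ℕ, (1 + b * x * r ^ j)) * F 0 := by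
  have hpartial (N : ℕ) : F x = (∏ j ∈ range N, (1 + b * x * r ^ j)) * F (x * r ^ N) := by
    induction N with
    | zero => simp
    | succ N ih => rw [ih, hF (x * r ^ N), mul_assoc x, ← pow_succ, prod_range_succ]; ring
  have hprod : Tendsto (fun N => ∏ j ∈ range N, (1 + b * x * r ^ j)) atTop
      (𝓝 (∏' j : ℕ, (1 + b * x * r ^ j))) := by
    refine (multipliable_one_add_of_summable ?_).tendsto_prod_tprod_nat
    simpa only [norm_mul, norm_pow] using
      (summable_geometric_of_lt_one (norm_nonneg r) hr).mul_left (‖b‖ * ‖x‖)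
  have hlim : Tendsto (fun N => F (x * r ^ N)) atTop (𝓝 (F 0)) :=
    hF0.tendsto.comp (by simpa using (tendsto_pow_atTop_nhds_zero_of_norm_lt_one hr).const_mul x)
  exact tendsto_nhds_unique (tendsto_const_nhds.congr hpartial) (hprod.mul hlim)

lemma tsum_euler_term_eq (hq : ‖q‖ < 1) (z : 𝕜) :
    ∑' n, term q 0 z n = (1 + q * z) * ∑' n, term q 0 (z * q) n := by
  refine tsum_eq_mul_tsum_of_telescoping (u := fun n => -(q * z) * term q 0 (z * q) n) _
    (summable_term hq 0 z) (summable_term hq 0 (z * q)) ((summable_term hq 0 (z * q)).mul_left _)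
    (by simp only [term_zero]; ring) fun n => ?_
  have hn : 1 - q * q ^ n ≠ 0 := by
    have := qPochhammer_self_ne_zero hq (n + 1)
    rw [qPochhammer_succ] at this
    exact right_ne_zero_of_mul this
  linear_combination euler_term_succ_sub q z hn

lemma tsum_term_eq (hq : ‖q‖ < 1) (a : 𝕜) :
    ∑' n, term q a 1 n = (1 - a * q) * ∑' n, term q (a * q ^ 2) 1 n := by
  -- `u n = a (aq;q)_n q^{(n+1)(n+2)/2} / (q;q)_n`
  refine tsum_eq_mul_tsum_of_telescoping (u := fun n => a * q * term q (a * q) q n) _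
    (summable_term hq a 1) (summable_term hq _ 1) ((summable_term hq _ q).mul_left _)
    (by simp only [term_zero]; ring) fun n => ?_
  linear_combination term_succ_sub_mul_term_succ q a (qPochhammer_self_ne_zero hq (n + 1))

end Analysis

end BaileyDaum

open BaileyDaum

/-- `Σ_{n≥0} (a;q)_n q^{n(n+1)/2} / (q;q)_n = (−q;q)_∞ (aq;q²)_∞`. -/
theorem bailey_daum (a q : ℂ) (hq : ‖q‖ < 1) :
    (∑' n : ℕ, (∏ j ∈ Finset.range n, (1 - a * q ^ j)) * q ^ (n * (n + 1) / 2) /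
        ∏ j ∈ Finset.range n, (1 - q ^ (j + 1))) =
      (∏' j : ℕ, (1 + q ^ (j + 1))) * ∏' j : ℕ, (1 - a * q * (q ^ 2) ^ j) := by
  have hq2 : ‖q ^ 2‖ < 1 := by
    rw [norm_pow]
    exact pow_lt_one₀ (norm_nonneg q) hq two_ne_zero
  have hcont := continuous_tsum_term hq
  have hF := eq_tprod_mul_of_eq_mul_comp (F := fun a => ∑' n, term q a 1 n) (b := -q) hq2
    (fun x => by rw [tsum_term_eq hq x]; ring)
    (hcont.comp (continuous_id.prodMk continuous_const)).continuousAt a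
  have hE := eq_tprod_mul_of_eq_mul_comp (F := fun z => ∑' n, term q 0 z n) (b := q) hq
    (tsum_euler_term_eq hq) (hcont.comp (continuous_const.prodMk continuous_id)).continuousAt 1
  calc _ = ∑' n, term q a 1 n := tsum_congr fun n => by simp [term, qPochhammer, pow_succ']
    _ = _ := by
      rw [hF, hE, tsum_euler_term_zero, mul_one, mul_comm]
      congr 1 <;> exact tprod_congr fun j => by ring
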